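/- arXiv:1111.5386 — 7 statements merged into one kernel-verified Lean document; each statement's English description precedes it below -/
import Mathlib

section
/- For a sequence σ of length n with values in ℕ, define inv(j) = {k : k < j and σ(k) > σ(j)}, and define R to be the set of indices j ∈ [0, n) such that there exists k < j with |[k, j) ∩ inv(j)| > (j - k)/2. Then |R| ≤ 2 · ed(σ), where ed(σ) is the edit distance to monotonicity of σ. -/
/-- A sequence is non-decreasing on an index set `S`. -/
def MonoOn {n : ℕ} {α : Type*} [Preorder α] (σ : Fin n → α) (S : Finset (Fin n)) : Prop :=
  ∀ i ∈ S, ∀ j ∈ S, i ≤ j → σ i ≤ σ j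

/-- Length of the longest non-decreasing subsequence. -/
noncomputable def lisLen {n : ℕ} {α : Type*} [Preorder α] (σ : Fin n → α) : ℕ :=
  sSup {k | ∃ S : Finset (Fin n), S.card = k ∧ MonoOn σ S}

/-- Edit distance to monotonicity: minimum number of deletions leaving a
non-decreasing subsequence. -/
noncomputable def edDist {n : ℕ} {α : Type*} [Preorder α] (σ : Fin n → α) : ℕ :=
  sInf {k | ∃ S : Finset (Fin n), S.card = k ∧ MonoOn σ Sᶜ}

/-!
Fix an optimal deletion set `D`. Every inversion of a kept position `j` lies in `D`, so a kept
`j ∈ R` ends a window `[k, j)` in which `D` has a strict majority. There are at most `#D` such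
positions: on the walk that steps up at positions of `D` and down (truncated at `0`) elsewhere,
a `D`-majority window ending at `j` forces positive height at `j`, so the step at `j` actually
lowers the height, which can happen no more often than the height is raised.
-/

open Finset

def upDownWalk (D : Finset ℕ) : ℕ → ℕ
  | 0 => 0
  | j + 1 => if j ∈ D then upDownWalk D j + 1 else upDownWalk D j - 1

lemma two_mul_card_filter_Ico_le (D : Finset ℕ) {k j : ℕ} (hkj : k ≤ j) :
    2 * #{i ∈ Ico k j | i ∈ D} ≤ upDownWalk D j + (j - k) := by
  induction j, hkj using Nat.le_induction with
  | base => simp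
  | succ j hkj ih =>
    rw [card_filter, sum_Ico_succ_top hkj, ← card_filter]
    by_cases hj : j ∈ D <;> simp only [upDownWalk, hj, if_true, if_false] <;> omega

lemma card_filter_notMem_pos_add_upDownWalk (D : Finset ℕ) (N : ℕ) :
    #{j ∈ range N | j ∉ D ∧ 0 < upDownWalk D j} + upDownWalk D N
      = #{j ∈ range N | j ∈ D} := by
  induction N with
  | zero => simp [upDownWalk]
  | succ N ih =>
    rw [card_filter, card_filter, sum_range_succ, sum_range_succ, ← card_filter, ← card_filter]
    by_cases hN : N ∈ D <;> by_cases hpos : 0 < upDownWalk D N <;>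
      simp only [upDownWalk, hN, hpos, not_true, not_false_eq_true, and_true, and_false,
        if_true, if_false] <;> omega

theorem Nat.card_filter_notMem_exists_majority_le (D : Finset ℕ) (N : ℕ) :
    #{j ∈ range N | j ∉ D ∧ ∃ k < j, j - k < 2 * #{i ∈ Ico k j | i ∈ D}} ≤ #D := by
  have hsub : {j ∈ range N | j ∉ D ∧ ∃ k < j, j - k < 2 * #{i ∈ Ico k j | i ∈ D}} ⊆
      {j ∈ range N | j ∉ D ∧ 0 < upDownWalk D j} := by
    refine monotone_filter_right _ ?_
    rintro j - ⟨hjD, k, hkj, hk⟩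
    have := two_mul_card_filter_Ico_le D hkj.le
    exact ⟨hjD, by omega⟩
  have hD : #{j ∈ range N | j ∈ D} ≤ #D := card_le_card fun j hj => (mem_filter.1 hj).2
  have := card_filter_notMem_pos_add_upDownWalk D N
  have := card_le_card hsub
  omega

theorem Fin.card_filter_notMem_exists_majority_le {n : ℕ} (D : Finset (Fin n)) :
    #{j : Fin n | j ∉ D ∧ ∃ k < j, (j : ℕ) - k < 2 * #{i ∈ Ico k j | i ∈ D}} ≤ #D := by
  set D' := D.map Fin.valEmbedding
  have hIco (k j : Fin n) : #{i ∈ Ico k j | i ∈ D} = #{i ∈ Ico (k : ℕ) j | i ∈ D'} := by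
    rw [← Fin.map_valEmbedding_Ico, filter_map, card_map]
    simp [D', Fin.val_inj]
  rw [← card_map Fin.valEmbedding, ← card_map (s := D) Fin.valEmbedding]
  refine (card_le_card ?_).trans (Nat.card_filter_notMem_exists_majority_le D' n)
  intro x hx
  obtain ⟨j, hj, rfl⟩ := mem_map.1 hx
  obtain ⟨hjD, k, hkj, hk⟩ := (mem_filter.1 hj).2
  exact mem_filter.2 ⟨mem_range.2 j.isLt, (mem_map' _).not.2 hjD, k, hkj, hIco k j ▸ hk⟩

lemma exists_card_eq_edDist {n : ℕ} {α : Type*} [Preorder α] (σ : Fin n → α) :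
    ∃ D : Finset (Fin n), #D = edDist σ ∧ MonoOn σ Dᶜ :=
  Nat.sInf_mem (s := {k | ∃ S : Finset (Fin n), #S = k ∧ MonoOn σ Sᶜ})
    ⟨n, univ, card_fin n, fun i hi => absurd (mem_univ i) (mem_compl.1 hi)⟩

lemma mem_of_monoOn_compl {n : ℕ} {α : Type*} [Preorder α] {σ : Fin n → α}
    {D : Finset (Fin n)} (hD : MonoOn σ Dᶜ) {i j : Fin n} (hj : j ∉ D) (hij : i ≤ j)
    (hσ : σ j < σ i) : i ∈ D := by
  by_contra hi
  exact lt_irrefl _ (hσ.trans_le (hD i (mem_compl.2 hi) j (mem_compl.2 hj) hij))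

theorem R_card_le_two_ed {n : ℕ} (σ : Fin n → ℕ) :
    (Finset.univ.filter (fun j : Fin n => ∃ k : Fin n, k < j ∧
        (j : ℕ) - (k : ℕ) <
          2 * ((Finset.Ico k j).filter (fun i => σ j < σ i)).card)).card
      ≤ 2 * edDist σ := by
  obtain ⟨D, hDcard, hD⟩ := exists_card_eq_edDist σ
  set M : Finset (Fin n) :=
    {j | j ∉ D ∧ ∃ k < j, (j : ℕ) - k < 2 * #{i ∈ Ico k j | i ∈ D}}
  have hR : Finset.univ.filter (fun j : Fin n => ∃ k : Fin n, k < j ∧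
        (j : ℕ) - (k : ℕ) < 2 * ((Finset.Ico k j).filter (fun i => σ j < σ i)).card) ⊆
      D ∪ M := by
    intro j hj
    obtain ⟨k, hkj, hk⟩ := (mem_filter.1 hj).2
    by_cases hjD : j ∈ D
    · exact mem_union_left _ hjD
    have hinv : #{i ∈ Ico k j | σ j < σ i} ≤ #{i ∈ Ico k j | i ∈ D} :=
      card_le_card <| monotone_filter_right _ fun i hi =>
        mem_of_monoOn_compl hD hjD (mem_Ico.1 hi).2.le
    exact mem_union_right _ (mem_filter.2 ⟨mem_univ j, hjD, k, hkj, by omega⟩)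
  have hM : #M ≤ #D := Fin.card_filter_notMem_exists_majority_le D
  calc _ ≤ #D + #M := (card_le_card hR).trans (card_union_le _ _)
    _ ≤ 2 * edDist σ := by omega
end

section
/- For a sequence σ of length n with values in ℕ, define inv(j) = {k : k < j and σ(k) > σ(j)}, and R = {j : ∃ k < j, |[k, j) ∩ inv(j)| > (j-k)/2}. Then ed(σ) ≤ 2|R|, where ed(σ) is the edit distance to monotonicity. -/
/-!
Call the indices outside `R` good. Deleting `R` together with the good indices `i` that form an
inversion with some later good index leaves a non-decreasing sequence, so it suffices to inject
these `i` into `R`. For such an `i`, let `j` be the first good index after it with `σ j < σ i`.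
Every good index strictly between `i` and `j` is then an inversion of `j`, and as `j ∉ R` the
inversions of `j` fill at most half of `[i, j)`; since `i` itself is one of them, `R` holds a strict
majority of `(i, j)`. A greedy matching from left to right turns these majorities into an
injection into `R`.
-/

open Finset

section Matching

variable {ι : Type*} [LinearOrder ι] [LocallyFiniteOrder ι]

theorem exists_injOn_lt_of_card_inter_Ioo_lt (R s : Finset ι)
    (h : ∀ i ∈ s, ∃ j, i < j ∧ #(Ioo i j ∩ s) < #(Ioo i j ∩ R)) :
    ∃ g : ι → ι, Set.InjOn g s ∧ ∀ i ∈ s, g i ∈ R ∧ i < g i := by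
  classical
  induction s using Finset.strongInduction with
  | H s ih =>
  rcases s.eq_empty_or_nonempty with rfl | hne
  · exact ⟨id, by simp, by simp⟩
  set i₀ := s.min' hne
  have hi₀ : i₀ ∈ s := s.min'_mem hne
  obtain ⟨g, hg_inj, hg⟩ := ih (s.erase i₀) (erase_ssubset hi₀) fun i hi => by
    obtain ⟨j, hij, hj⟩ := h i (mem_of_mem_erase hi)
    exact ⟨j, hij, (card_le_card (inter_subset_inter_left (erase_subset _ _))).trans_lt hj⟩
  obtain ⟨j₀, -, hcard⟩ := h i₀ hi₀
  -- Only indices of `s` inside `(i₀, j₀)` can have been matched into `(i₀, j₀)`.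
  obtain ⟨r, hr, hr_free⟩ := exists_mem_notMem_of_card_lt_card
    (card_image_le.trans_lt hcard : #((Ioo i₀ j₀ ∩ s).image g) < _)
  obtain ⟨hr_Ioo, hrR⟩ := mem_inter.1 hr
  have hr_new : r ∉ g '' (s.erase i₀ : Set ι) := by
    rintro ⟨i, hi, rfl⟩
    obtain ⟨hi₀i, his⟩ := mem_erase.1 hi
    have hi_Ioo : i ∈ Ioo i₀ (g i) := mem_Ioo.2
      ⟨lt_of_le_of_ne (s.min'_le i his) (Ne.symm hi₀i), (hg i hi).2⟩
    exact hr_free (mem_image_of_mem g (mem_inter.2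
      ⟨Ioo_subset_Ioo_right (mem_Ioo.1 hr_Ioo).2.le hi_Ioo, his⟩))
  have hupdate : Set.EqOn g (Function.update g i₀ r) (s.erase i₀ : Set ι) := fun i hi =>
    (Function.update_of_ne (ne_of_mem_erase hi) r g).symm
  refine ⟨Function.update g i₀ r, ?_, fun i hi => ?_⟩
  · rw [← insert_erase hi₀, coe_insert, Set.injOn_insert (by simp)]
    refine ⟨hg_inj.congr hupdate, ?_⟩
    rwa [Function.update_self, ← hupdate.image_eq]
  · by_cases hii₀ : i = i₀
    · subst hii₀
      simpa using ⟨hrR, (mem_Ioo.1 hr_Ioo).1⟩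
    · rw [Function.update_of_ne hii₀]
      exact hg i (mem_erase.2 ⟨hii₀, hi⟩)

theorem card_le_card_of_forall_exists_card_inter_Ioo_lt {R s : Finset ι}
    (h : ∀ i ∈ s, ∃ j, i < j ∧ #(Ioo i j ∩ s) < #(Ioo i j ∩ R)) : #s ≤ #R := by
  obtain ⟨g, hg_inj, hg⟩ := exists_injOn_lt_of_card_inter_Ioo_lt R s h
  exact card_le_card_of_injOn g (fun i hi => (hg i hi).1) hg_inj

end Matching

section Inversions

variable {n : ℕ} {α : Type*} [LinearOrder α] (σ : Fin n → α)

/-- The set `R` of the statement. -/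
def badIndices : Finset (Fin n) :=
  Finset.univ.filter (fun j : Fin n => ∃ k : Fin n, k < j ∧
    (j : ℕ) - (k : ℕ) < 2 * ((Finset.Ico k j).filter (fun i => σ j < σ i)).card)

def invertedGoodIndices : Finset (Fin n) :=
  {i | i ∉ badIndices σ ∧ ∃ j, j ∉ badIndices σ ∧ i < j ∧ σ j < σ i}

variable {σ}

theorem two_mul_card_inv_le_of_notMem_badIndices {j k : Fin n} (hj : j ∉ badIndices σ)
    (hkj : k < j) : 2 * #{i ∈ Ico k j | σ j < σ i} ≤ j - k := by
  simp only [badIndices, mem_filter, mem_univ, true_and, not_exists, not_and, not_lt] at hj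
  exact hj k hkj

variable (σ) in
theorem monoOn_compl_badIndices_union :
    MonoOn σ (badIndices σ ∪ invertedGoodIndices σ)ᶜ := by
  intro i hi j hj hij
  simp only [invertedGoodIndices, mem_compl, mem_union, mem_filter, mem_univ, true_and,
    not_or, not_and, not_exists] at hi hj
  by_contra! hji
  exact hi.2 hi.1 j hj.1 (lt_of_le_of_ne hij (by rintro rfl; exact lt_irrefl _ hji)) hji

theorem exists_card_inter_Ioo_lt_of_mem_invertedGoodIndices {i : Fin n}
    (hi : i ∈ invertedGoodIndices σ) :
    ∃ j, i < j ∧ #(Ioo i j ∩ invertedGoodIndices σ) < #(Ioo i j ∩ badIndices σ) := by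
  set R := badIndices σ
  set W : Finset (Fin n) := {j | j ∉ R ∧ i < j ∧ σ j < σ i}
  obtain ⟨hiR, hW⟩ : i ∉ R ∧ W.Nonempty := by
    simp only [invertedGoodIndices, mem_filter, mem_univ, true_and] at hi
    obtain ⟨hiR, j, hj⟩ := hi
    exact ⟨hiR, j, by simpa [W] using hj⟩
  set j := W.min' hW
  obtain ⟨hjR, hij, hji⟩ : j ∉ R ∧ i < j ∧ σ j < σ i :=
    (mem_filter.1 (W.min'_mem hW)).2
  have hgood_inv : Ioo i j \ R ⊆ {m ∈ Ioo i j | σ j < σ m} := by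
    intro m hm
    obtain ⟨hm_Ioo, hmR⟩ := mem_sdiff.1 hm
    refine mem_filter.2 ⟨hm_Ioo, lt_of_not_ge fun hmj => ?_⟩
    have hmW : m ∈ W := by simpa [W] using ⟨hmR, (mem_Ioo.1 hm_Ioo).1, hmj.trans_lt hji⟩
    exact (W.min'_le m hmW).not_gt (mem_Ioo.1 hm_Ioo).2
  have hinv : #{m ∈ Ico i j | σ j < σ m} = #{m ∈ Ioo i j | σ j < σ m} + 1 := by
    rw [← Ioo_insert_left hij, filter_insert, if_pos hji, card_insert_of_notMem (by simp)]
  have hT : Ioo i j ∩ invertedGoodIndices σ ⊆ Ioo i j \ R := by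
    intro m hm
    simp only [invertedGoodIndices, mem_inter, mem_filter, mem_univ, true_and] at hm
    exact mem_sdiff.2 ⟨hm.1, hm.2.1⟩
  refine ⟨j, hij, ?_⟩
  have := two_mul_card_inv_le_of_notMem_badIndices hjR hij
  have := card_sdiff_add_card_inter (Ioo i j) R
  have := card_le_card hgood_inv
  have := card_le_card hT
  have := Fin.card_Ioo i j
  have : (i : ℕ) < j := hij
  omega

end Inversions

theorem ed_le_two_R_card {n : ℕ} (σ : Fin n → ℕ) :
    edDist σ ≤
      2 * (Finset.univ.filter (fun j : Fin n => ∃ k : Fin n, k < j ∧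
        (j : ℕ) - (k : ℕ) <
          2 * ((Finset.Ico k j).filter (fun i => σ j < σ i)).card)).card := by
  change edDist σ ≤ 2 * #(badIndices σ)
  have hT : #(invertedGoodIndices σ) ≤ #(badIndices σ) :=
    card_le_card_of_forall_exists_card_inter_Ioo_lt fun _ hi =>
      exists_card_inter_Ioo_lt_of_mem_invertedGoodIndices hi
  calc edDist σ ≤ #(badIndices σ ∪ invertedGoodIndices σ) :=
        Nat.sInf_le ⟨_, rfl, monoOn_compl_badIndices_union σ⟩
    _ ≤ #(badIndices σ) + #(invertedGoodIndices σ) := card_union_le _ _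
    _ ≤ 2 * #(badIndices σ) := by omega
end

section
/- Let σ be a sequence of length n and suppose R' is a set of indices such that every index j not in R' satisfies: for all k < j, |[k, j) ∩ inv(j)| ≤ (1/2 + 2ε')(j - k), where 0 < ε' < 1/4. Then there exists a non-decreasing subsequence of σ of length at least n - |R'|/(1/2 - 2ε'). Equivalently, ed(σ) ≤ |R'|/(1/2 - 2ε'). -/
/-!
Call an index outside `R'` good. Iterative pruning builds a non-decreasing subsequence ending at a
good anchor `x`: take the largest good `j < x` with `σ j ≤ σ x`, keep `x`, delete the window
`(j, x)` and recurse from `j`. Every good index of the deleted window is an inversion of `x`, and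
`x` has inversions in at most a `1/2 + 2ε'` fraction of that window, so at least a `1/2 - 2ε'`
fraction of the deleted indices lie in `R'`. Summed over the windows, together with the tail
after the last good index (which lies entirely in `R'`), at most `|R'| / (1/2 - 2ε')` indices are
deleted.
-/

open Finset

def InvDensityLE {n : ℕ} {α : Type*} [LinearOrder α] (σ : Fin n → α) (R : Finset (Fin n))
    (ρ : ℝ) : Prop :=
  ∀ j : Fin n, j ∉ R → ∀ k : Fin n, k < j →
    (#((Ico k j).filter (fun i => σ j < σ i)) : ℝ) ≤ ρ * (((j : ℕ) : ℝ) - ((k : ℕ) : ℝ))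

section

variable {n : ℕ} {α : Type*}

theorem MonoOn.insert_of_le [Preorder α] {σ : Fin n → α} {S : Finset (Fin n)} {x : Fin n}
    (hS : MonoOn σ S) (hx : ∀ i ∈ S, i ≤ x ∧ σ i ≤ σ x) : MonoOn σ (insert x S) := by
  intro a ha b hb hab
  rcases mem_insert.mp ha with ha | ha <;> rcases mem_insert.mp hb with hb | hb
  · rw [ha, hb]
  · rw [ha, le_antisymm (ha ▸ hab) (hx b hb).1]
  · exact hb ▸ (hx a ha).2
  · exact hS a ha b hb hab

theorem MonoOn.card_le_lisLen [Preorder α] {σ : Fin n → α} {S : Finset (Fin n)}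
    (hS : MonoOn σ S) : #S ≤ lisLen σ :=
  le_csSup ⟨n, by rintro _ ⟨T, rfl, -⟩; simpa using T.card_le_univ⟩ ⟨S, rfl, hS⟩

theorem MonoOn.edDist_le [Preorder α] {σ : Fin n → α} {S : Finset (Fin n)}
    (hS : MonoOn σ S) : edDist σ ≤ n - #S :=
  Nat.sInf_le ⟨Sᶜ, by rw [card_compl, Fintype.card_fin], by rwa [compl_compl]⟩

variable [LinearOrder α] {σ : Fin n → α} {R : Finset (Fin n)} {ρ : ℝ}

theorem InvDensityLE.le_card_Ico_inter (hσ : InvDensityLE σ R ρ) {k x : Fin n} (hx : x ∉ R)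
    (hkx : k ≤ x) (hinv : ∀ i ∈ Ico k x, i ∉ R → σ x < σ i) :
    (1 - ρ) * (((x : ℕ) : ℝ) - ((k : ℕ) : ℝ)) ≤ #(Ico k x ∩ R) := by
  obtain rfl | hkx := hkx.eq_or_lt
  · simp
  have hgood : Ico k x \ R ⊆ (Ico k x).filter (fun i => σ x < σ i) := fun i hi => by
    rw [mem_sdiff] at hi
    exact mem_filter.mpr ⟨hi.1, hinv i hi.1 hi.2⟩
  have hgood' : (#(Ico k x \ R) : ℝ) ≤ #((Ico k x).filter (fun i => σ x < σ i)) := by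
    exact_mod_cast card_le_card hgood
  have hsplit : (#(Ico k x \ R) : ℝ) + #(Ico k x ∩ R) = ((x : ℕ) : ℝ) - ((k : ℕ) : ℝ) := by
    rw [← Nat.cast_add, card_sdiff_add_card_inter, Fin.card_Ico, Nat.cast_sub hkx.le]
  linarith [hσ x hx k hkx]

theorem InvDensityLE.le_card_Ioo_inter (hσ : InvDensityLE σ R ρ) {j x : Fin n} (hx : x ∉ R)
    (hjx : j < x) (hinv : ∀ i ∈ Ioo j x, i ∉ R → σ x < σ i) :
    (1 - ρ) * (((x : ℕ) : ℝ) - (j : ℕ) - 1) ≤ #(Ioo j x ∩ R) := by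
  have hjx' : (j : ℕ) < x := hjx
  let k : Fin n := ⟨j + 1, by omega⟩
  have hIco : Ico k x = Ioo j x := by
    ext i
    simp only [mem_Ico, mem_Ioo, Fin.le_def, Fin.lt_def, k]
    omega
  have hk : ((k : ℕ) : ℝ) = (j : ℕ) + 1 := by simp [k]
  have := hσ.le_card_Ico_inter (k := k) hx (show (k : ℕ) ≤ x from hjx) (hIco ▸ hinv)
  rwa [hIco, hk, ← sub_sub] at this

theorem InvDensityLE.le_card_Iio_inter (hσ : InvDensityLE σ R ρ) {x : Fin n} (hx : x ∉ R)
    (hinv : ∀ i < x, i ∉ R → σ x < σ i) : (1 - ρ) * ((x : ℕ) : ℝ) ≤ #(Iio x ∩ R) := by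
  let k : Fin n := ⟨0, x.pos⟩
  have hIco : Ico k x = Iio x := by
    ext i
    simp only [mem_Ico, mem_Iio, and_iff_right_iff_imp]
    exact fun _ => Nat.zero_le _
  have := hσ.le_card_Ico_inter (k := k) hx (Nat.zero_le (x : ℕ))
    fun i hi => hinv i (mem_Ico.mp hi).2
  rwa [hIco, show ((k : ℕ) : ℝ) = 0 from Nat.cast_zero, sub_zero] at this

theorem card_Iic_inter_add_card_Ioo_inter_le {ι : Type*} [LinearOrder ι] [LocallyFiniteOrder ι]
    [LocallyFiniteOrderBot ι] (R : Finset ι) {j x : ι} (hjx : j ≤ x) :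
    #(Iic j ∩ R) + #(Ioo j x ∩ R) ≤ #(Iic x ∩ R) := by
  rw [← card_union_of_disjoint]
  · exact card_le_card fun i hi => by
      simp only [mem_union, mem_inter, mem_Iic, mem_Ioo] at hi ⊢
      rcases hi with hi | hi
      · exact ⟨hi.1.trans hjx, hi.2⟩
      · exact ⟨hi.1.2.le, hi.2⟩
  · exact disjoint_left.mpr fun i hi hi' =>
      (mem_Iic.mp (mem_inter.mp hi).1).not_gt (mem_Ioo.mp (mem_inter.mp hi').1).1

theorem InvDensityLE.exists_monoOn_anchored (hσ : InvDensityLE σ R ρ) (x : Fin n) (hx : x ∉ R) :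
    ∃ S : Finset (Fin n), MonoOn σ S ∧ (∀ i ∈ S, i ≤ x ∧ σ i ≤ σ x) ∧
      (1 - ρ) * (((x : ℕ) : ℝ) + 1 - #S) ≤ #(Iic x ∩ R) := by
  induction x using WellFoundedLT.induction with
  | _ x ih =>
  set C := univ.filter (fun j => j < x ∧ j ∉ R ∧ σ j ≤ σ x) with hC
  by_cases hCne : C.Nonempty
  · obtain ⟨j, hjC, hjmax⟩ := C.exists_max_image id hCne
    obtain ⟨hjx, hjR, hjσ⟩ : j < x ∧ j ∉ R ∧ σ j ≤ σ x := by simpa [hC] using hjC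
    obtain ⟨S, hS, hSj, hScard⟩ := ih j hjx hjR
    have hwindow := hσ.le_card_Ioo_inter hx hjx fun i hi hiR => by
      by_contra! hσi
      exact (hjmax i (by simp [hC, (mem_Ioo.mp hi).2, hiR, hσi])).not_gt (mem_Ioo.mp hi).1
    have hsplit : (#(Iic j ∩ R) : ℝ) + #(Ioo j x ∩ R) ≤ #(Iic x ∩ R) := by
      exact_mod_cast card_Iic_inter_add_card_Ioo_inter_le R hjx.le
    have hSx : ∀ i ∈ S, i ≤ x ∧ σ i ≤ σ x := fun i hi =>
      ⟨(hSj i hi).1.trans hjx.le, (hSj i hi).2.trans hjσ⟩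
    have hxS : x ∉ S := fun hxS => (hSj x hxS).1.not_gt hjx
    refine ⟨insert x S, hS.insert_of_le hSx, ?_, ?_⟩
    · intro i hi
      rcases mem_insert.mp hi with rfl | hi
      · exact ⟨le_rfl, le_rfl⟩
      · exact hSx i hi
    · rw [card_insert_of_notMem hxS, Nat.cast_succ]
      linarith
  · have hwindow := hσ.le_card_Iio_inter hx fun i hi hiR => by
      by_contra! hσi
      exact hCne ⟨i, by simp [hC, hi, hiR, hσi]⟩
    have hIio : (#(Iio x ∩ R) : ℝ) ≤ #(Iic x ∩ R) := by
      exact_mod_cast card_le_card (inter_subset_inter_right Iio_subset_Iic_self)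
    refine ⟨{x}, fun a ha b hb _ => by rw [mem_singleton.mp ha, mem_singleton.mp hb], ?_, ?_⟩
    · intro i hi
      rw [mem_singleton.mp hi]
      exact ⟨le_rfl, le_rfl⟩
    · rw [card_singleton, Nat.cast_one]
      linarith

theorem InvDensityLE.exists_monoOn (hσ : InvDensityLE σ R ρ) (hρ : 0 ≤ ρ) :
    ∃ S : Finset (Fin n), MonoOn σ S ∧ (1 - ρ) * ((n : ℝ) - #S) ≤ #R := by
  by_cases hR : Rᶜ.Nonempty
  · obtain ⟨x, hxR, hxmax⟩ := Rᶜ.exists_max_image id hR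
    obtain ⟨S, hS, -, hScard⟩ := hσ.exists_monoOn_anchored x (mem_compl.mp hxR)
    refine ⟨S, hS, ?_⟩
    have htail : Ioi x ⊆ R := fun i hi => by
      by_contra hiR
      exact (hxmax i (mem_compl.mpr hiR)).not_gt (mem_Ioi.mp hi)
    have hsplit : #(Iic x ∩ R) + #(Ioi x) ≤ #R := by
      rw [← card_union_of_disjoint]
      · exact card_le_card (union_subset inter_subset_right htail)
      · exact disjoint_left.mpr fun i hi hi' =>
          (mem_Iic.mp (mem_inter.mp hi).1).not_gt (mem_Ioi.mp hi')
    have hsplit' : (#(Iic x ∩ R) : ℝ) + ((n : ℝ) - 1 - (x : ℕ)) ≤ #R := by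
      rw [Fin.card_Ioi] at hsplit
      have := x.isLt
      rw [← Nat.cast_one, ← Nat.cast_sub (by omega), ← Nat.cast_sub (by omega)]
      exact_mod_cast hsplit
    have hxn : ((x : ℕ) : ℝ) + 1 ≤ n := by exact_mod_cast x.isLt
    nlinarith
  · have hRuniv : R = univ := by simpa using hR
    refine ⟨∅, by simp [MonoOn], ?_⟩
    simp only [hRuniv, card_univ, Fintype.card_fin, card_empty, Nat.cast_zero, sub_zero]
    nlinarith [(n.cast_nonneg : (0 : ℝ) ≤ n)]

end

theorem ed_le_of_pruning {n : ℕ} (σ : Fin n → ℕ) (ε' : ℝ) (hε0 : 0 < ε') (hε1 : ε' < 1/4)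
    (R' : Finset (Fin n))
    (h : ∀ j : Fin n, j ∉ R' → ∀ k : Fin n, k < j →
        (((Finset.Ico k j).filter (fun i => σ j < σ i)).card : ℝ) ≤
          (1/2 + 2*ε') * (((j : ℕ) : ℝ) - ((k : ℕ) : ℝ))) :
    (n : ℝ) - (R'.card : ℝ) / (1/2 - 2*ε') ≤ (lisLen σ : ℝ) ∧
      (edDist σ : ℝ) ≤ (R'.card : ℝ) / (1/2 - 2*ε') := by
  obtain ⟨S, hS, hcard⟩ := InvDensityLE.exists_monoOn h (by linarith)
  have hδ : (0 : ℝ) < 1/2 - 2*ε' := by linarith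
  have hdeleted : (n : ℝ) - #S ≤ #R' / (1/2 - 2*ε') := by
    rw [le_div_iff₀ hδ]
    linarith
  have hlis : (#S : ℝ) ≤ lisLen σ := by exact_mod_cast hS.card_le_lisLen
  have hed : (edDist σ : ℝ) ≤ n - #S := by
    have hSn : #S ≤ n := by simpa using S.card_le_univ
    rw [← Nat.cast_sub hSn]
    exact_mod_cast hS.edDist_le
  exact ⟨by linarith, by linarith⟩
end

section
/- Let σ be a sequence of length n with values in ℕ. Suppose for index j there exists k < j and an element a of the multiset {σ(i) : i ∈ [k, j)} whose rank in that multiset is at most (j-k)/2, such that σ(j) < a. Then |{i ∈ [k, j) : σ(i) > σ(j)}| > (j-k)/2, i.e., more than half the items in [k, j) are inversions with j. -/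
/-- Rank of `a` in a multiset: its 1-indexed position in sorted non-decreasing
order (smallest possible position among equal elements). -/
def rankLow {α : Type*} [LinearOrder α] (Q : Multiset α) (a : α) : ℕ :=
  (Q.filter (fun b => b < a)).card + 1

theorem rankLow_add_card_filter_le {α : Type*} [LinearOrder α] (Q : Multiset α) (a : α) :
    rankLow Q a + (Q.filter (a ≤ ·)).card = Q.card + 1 := by
  have hsplit := congrArg Multiset.card (Multiset.filter_add_not (· < a) Q)
  simp only [Multiset.card_add, not_lt] at hsplit
  rw [rankLow]
  omega

theorem card_lt_two_mul_card_filter_gt_of_two_mul_rankLow_le {α : Type*} [LinearOrder α]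
    {Q : Multiset α} {a b : α} (hrank : 2 * rankLow Q a ≤ Q.card) (hba : b < a) :
    Q.card < 2 * (Q.filter (b < ·)).card := by
  have hle : (Q.filter (a ≤ ·)).card ≤ (Q.filter (b < ·)).card :=
    Multiset.card_le_card <| Multiset.monotone_filter_right Q fun _ => hba.trans_le
  have hsplit := rankLow_add_card_filter_le Q a
  omega

theorem small_rank_implies_many_inversions_general {n : ℕ} (σ : Fin n → ℕ) (j k : Fin n)
    (a : ℕ)
    (hrank : 2 * rankLow ((Finset.Ico k j).val.map σ) a ≤ (j : ℕ) - (k : ℕ))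
    (hja : σ j < a) :
    (j : ℕ) - (k : ℕ) < 2 * ((Finset.Ico k j).filter (fun i => σ j < σ i)).card := by
  have hcard : ((Finset.Ico k j).val.map σ).card = (j : ℕ) - (k : ℕ) := by
    simp
  have hfilter : (((Finset.Ico k j).val.map σ).filter (σ j < ·)).card
      = ((Finset.Ico k j).filter (fun i => σ j < σ i)).card := by
    rw [Multiset.filter_map, Multiset.card_map]
    rfl
  rw [← hcard, ← hfilter]
  exact card_lt_two_mul_card_filter_gt_of_two_mul_rankLow_le (hcard ▸ hrank) hja

theorem small_rank_implies_many_inversions {n : ℕ} (σ : Fin n → ℕ) (j k : Fin n)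
    (hkj : k < j) (a : ℕ) (ha : a ∈ (Finset.Ico k j).val.map σ)
    (hrank : 2 * rankLow ((Finset.Ico k j).val.map σ) a ≤ (j : ℕ) - (k : ℕ))
    (hja : σ j < a) :
    (j : ℕ) - (k : ℕ) < 2 * ((Finset.Ico k j).filter (fun i => σ j < σ i)).card :=
  small_rank_implies_many_inversions_general σ j k a hrank hja
end

section
/- Let 0 < ε' < 1 and let I = [k, j) be an interval of length L. If a is an (ε'/2)-approximate φ-quantile of the multiset of values on an interval of length L, then a is an ε'-approximate φ-quantile of the multiset of values on any interval of length L' with L ≤ L' ≤ (1 + ε'/2)L that contains the first interval, provided the two intervals share the same right endpoint and the larger one extends to the left. Formally: if the rank of a in a multiset Q of size L lies in [(φ - ε'/2)L, (φ + ε'/2)L], and Q ⊆ Q' with |Q'| = L' ≤ (1 + ε'/2)L, then the rank of a in Q' lies in [(φ - ε')L', (φ + ε')L']. -/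
/-!
Write `L' = L + d` with `0 ≤ d ≤ (ε'/2) L`. Passing from `Q` to `Q'` leaves the lower end of the
rank window in place and raises the upper end by at most `d`. Widening the window from `ε'/2` to
`ε'` gains the slack `(ε'/2) L ≥ d` on each side. Rescaling from `L` to `L'` costs `(φ - ε') d ≤ d`
of it at the lower end (as `φ ≤ 1`) and, together with the rise of the upper end,
`(1 - φ - ε') d ≤ d` at the upper end (as `0 ≤ φ`).
-/

section QuantileWindow

variable {K : Type*} [Field K] [LinearOrder K] [IsStrictOrderedRing K] {ε φ L L' : K}

theorem quantile_lower_bound_of_extension (hφε : φ ≤ 1 + ε) (hLL' : L ≤ L')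
    (hup : L' ≤ (1 + ε / 2) * L) : (φ - ε) * L' ≤ (φ - ε / 2) * L := by
  nlinarith [mul_nonneg (sub_nonneg.mpr hφε) (sub_nonneg.mpr hLL')]

theorem quantile_upper_bound_of_extension (hφε : 0 ≤ φ + ε) (hLL' : L ≤ L')
    (hup : L' ≤ (1 + ε / 2) * L) : (φ + ε / 2) * L + (L' - L) ≤ (φ + ε) * L' := by
  nlinarith [mul_nonneg hφε (sub_nonneg.mpr hLL')]

end QuantileWindow

theorem approximate_quantile_extension_general
    (ε' φ : ℝ) (hε0 : 0 < ε') (hφ0 : 0 ≤ φ) (hφ1 : φ ≤ 1)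
    (L L' : ℕ)
    (hLL' : L ≤ L') (hup : (L' : ℝ) ≤ (1 + ε'/2) * (L : ℝ))
    (r r' : ℝ)
    (hr1 : (φ - ε'/2) * (L : ℝ) ≤ r) (hr2 : r ≤ (φ + ε'/2) * (L : ℝ))
    (hr'1 : r ≤ r') (hr'2 : r' ≤ r + ((L' : ℝ) - (L : ℝ))) :
    (φ - ε') * (L' : ℝ) ≤ r' ∧ r' ≤ (φ + ε') * (L' : ℝ) := by
  have hLL'ℝ : (L : ℝ) ≤ L' := Nat.cast_le.mpr hLL'
  constructor
  · calc (φ - ε') * (L' : ℝ)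
        ≤ (φ - ε' / 2) * L := quantile_lower_bound_of_extension (by linarith) hLL'ℝ hup
      _ ≤ r' := hr1.trans hr'1
  · calc r' ≤ (φ + ε' / 2) * L + (L' - L) := by linarith
      _ ≤ (φ + ε') * L' := quantile_upper_bound_of_extension (by linarith) hLL'ℝ hup

theorem approximate_quantile_extension {α : Type*} [LinearOrder α]
    (ε' φ : ℝ) (hε0 : 0 < ε') (hε1 : ε' < 1) (hφ0 : 0 ≤ φ) (hφ1 : φ ≤ 1)
    (Q Q' : Multiset α) (a : α) (ha : a ∈ Q) (hsub : Q ≤ Q')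
    (L L' : ℕ) (hL : Multiset.card Q = L) (hL' : Multiset.card Q' = L')
    (hLL' : L ≤ L') (hup : (L' : ℝ) ≤ (1 + ε'/2) * (L : ℝ))
    (r r' : ℝ)
    (hr1 : (φ - ε'/2) * (L : ℝ) ≤ r) (hr2 : r ≤ (φ + ε'/2) * (L : ℝ))
    (hr'1 : r ≤ r') (hr'2 : r' ≤ r + ((L' : ℝ) - (L : ℝ))) :
    (φ - ε') * (L' : ℝ) ≤ r' ∧ r' ≤ (φ + ε') * (L' : ℝ) :=
  approximate_quantile_extension_general ε' φ hε0 hφ0 hφ1 L L' hLL' hup r r' hr1 hr2 hr'1 hr'2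
end

section
/- Fix n ≥ 1. For a binary string x ∈ {0,1}^n and an index i ∈ [n], define the out-of-order stream σ of length n+1 by σ(j) = (2j-1, 3j-2) if x_j = 0 and σ(j) = (2j-1, 3j) if x_j = 1 for j ∈ [n], and σ(n+1) = (2i, 3i-1). Let V(σ) be the value sequence obtained by sorting the items by timestamp (first coordinate). Then ed(V(σ)) = 0 if x_i = 0, and ed(V(σ)) ≥ 1 if x_i = 1. -/
/-- Timestamps of the out-of-order stream built from `x` and `i`:
item `j ∈ [n]` (0-indexed as `j`) has timestamp `2(j+1)-1`, and the extra
item has timestamp `2(i+1)`. -/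
def tsIdx (n : ℕ) (i : Fin n) : Fin (n+1) → ℕ := fun j =>
  if (j : ℕ) < n then 2 * (j : ℕ) + 1 else 2 * (i : ℕ) + 2

/-- Values: item `j ∈ [n]` has value `3(j+1)-2` if `x j = false` and `3(j+1)`
if `x j = true`; the extra item has value `3(i+1)-1`. -/
def valIdx (n : ℕ) (x : Fin n → Bool) (i : Fin n) : Fin (n+1) → ℕ := fun j =>
  if h : (j : ℕ) < n then (if x ⟨j, h⟩ then 3 * (j : ℕ) + 3 else 3 * (j : ℕ) + 1)
  else 3 * (i : ℕ) + 2

theorem index_reduction (n : ℕ) (hn : 1 ≤ n) (x : Fin n → Bool) (i : Fin n)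
    (e : Equiv.Perm (Fin (n+1)))
    (he : StrictMono (fun j => tsIdx n i (e j))) :
    (x i = false → edDist (fun j => valIdx n x i (e j)) = 0) ∧
      (x i = true → 1 ≤ edDist (fun j => valIdx n x i (e j))) := by
  constructor
  · intro hx
    have key : ∀ a b : Fin (n+1), tsIdx n i a ≤ tsIdx n i b →
        valIdx n x i a ≤ valIdx n x i b := by
      intro a b hab
      unfold tsIdx valIdx at *
      by_cases ha : (a : ℕ) < n
      · by_cases hb : (b : ℕ) < n
        · rw [if_pos ha, if_pos hb] at hab
          rw [dif_pos ha, dif_pos hb]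
          rcases Nat.lt_or_ge (a : ℕ) (b : ℕ) with h | h
          · have h1 : (if x ⟨a, ha⟩ then 3 * (a:ℕ) + 3 else 3 * (a:ℕ) + 1) ≤ 3 * (a:ℕ) + 3 := by
              split <;> omega
            have h2 : 3 * (b:ℕ) + 1 ≤ (if x ⟨b, hb⟩ then 3 * (b:ℕ) + 3 else 3 * (b:ℕ) + 1) := by
              split <;> omega
            omega
          · have hab' : (a : ℕ) = (b : ℕ) := by omega
            have : (⟨(a:ℕ), ha⟩ : Fin n) = ⟨(b:ℕ), hb⟩ := by simp [hab']
            rw [this]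
            split <;> omega
        · rw [if_pos ha, if_neg hb] at hab
          rw [dif_pos ha, dif_neg hb]
          rcases Nat.lt_or_ge (a : ℕ) (i : ℕ) with h | h
          · have h1 : (if x ⟨a, ha⟩ then 3 * (a:ℕ) + 3 else 3 * (a:ℕ) + 1) ≤ 3 * (a:ℕ) + 3 := by
              split <;> omega
            omega
          · have hai : (a : ℕ) = (i : ℕ) := by omega
            have : (⟨(a:ℕ), ha⟩ : Fin n) = i := by
              apply Fin.ext; simpa using hai
            rw [this, hx]
            simp only [Bool.false_eq_true, if_false]
            omega
      · by_cases hb : (b : ℕ) < n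
        · rw [if_neg ha, if_pos hb] at hab
          rw [dif_neg ha, dif_pos hb]
          have h2 : 3 * (b:ℕ) + 1 ≤ (if x ⟨b, hb⟩ then 3 * (b:ℕ) + 3 else 3 * (b:ℕ) + 1) := by
            split <;> omega
          omega
        · rw [dif_neg ha, dif_neg hb]
    have h0 : (0 : ℕ) ∈ {k | ∃ S : Finset (Fin (n+1)), S.card = k ∧
        MonoOn (fun j => valIdx n x i (e j)) Sᶜ} := by
      refine ⟨∅, Finset.card_empty, ?_⟩
      intro p _ q _ hpq
      exact key _ _ (he.monotone hpq)
    exact Nat.eq_zero_of_le_zero (Nat.sInf_le h0)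
  · intro hx
    have hne : {k | ∃ S : Finset (Fin (n+1)), S.card = k ∧
        MonoOn (fun j => valIdx n x i (e j)) Sᶜ}.Nonempty := by
      refine ⟨n+1, Finset.univ, by simp, ?_⟩
      intro p hp
      simp at hp
    rw [edDist]
    by_contra hc
    push_neg at hc
    have h0 : sInf {k | ∃ S : Finset (Fin (n+1)), S.card = k ∧
        MonoOn (fun j => valIdx n x i (e j)) Sᶜ} = 0 := by omega
    obtain ⟨S, hS, hmono⟩ := Nat.sInf_mem hne
    rw [h0] at hS
    have hSempty : S = ∅ := Finset.card_eq_zero.mp hS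
    subst hSempty
    set a : Fin (n+1) := ⟨(i : ℕ), by omega⟩ with hadef
    set b : Fin (n+1) := ⟨n, by omega⟩ with hbdef
    have hia : (a : ℕ) < n := i.isLt
    have hib : ¬ ((b : ℕ) < n) := by simp [hbdef]
    have hts : tsIdx n i a < tsIdx n i b := by
      unfold tsIdx
      rw [if_pos hia, if_neg hib]
      simp [hadef]
    have hlt : e.symm a < e.symm b := by
      have := he.lt_iff_lt (a := e.symm a) (b := e.symm b)
      simp only [Equiv.apply_symm_apply] at this
      exact this.mp hts
    have hmem : ∀ p : Fin (n+1), p ∈ (∅ : Finset (Fin (n+1)))ᶜ := by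
      intro p; simp
    have hle := hmono _ (hmem (e.symm a)) _ (hmem (e.symm b)) (le_of_lt hlt)
    simp only [Equiv.apply_symm_apply] at hle
    unfold valIdx at hle
    rw [dif_pos hia, dif_neg hib] at hle
    have hxa : x ⟨(a : ℕ), hia⟩ = true := by
      have : (⟨(a : ℕ), hia⟩ : Fin n) = i := by apply Fin.ext; simp [hadef]
      rw [this, hx]
    rw [hxa] at hle
    simp only [if_true, hadef] at hle
    omega
end

section
/- Fix t ≥ 2 and ℓ ≥ 1. Let A_1, ..., A_t ⊆ [ℓ] be pairwise disjoint sets. Consider the sequence of items where player i contributes, for each j ∈ A_i (in increasing order of j), the item with timestamp (j-1)t + i and value (ℓ-j)t + i, and the items are concatenated player by player. Let V be the value sequence sorted in increasing order of timestamps. Then lis(V) = 1, i.e., the longest non-decreasing subsequence of V has length 1 (assuming at least one item exists). -/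
/-- Timestamp of the item contributed by player `i` (0-indexed) for element
`j` (0-indexed) : `(j-1)t + i` with 1-indexed `i,j`, i.e. `j₀·t + i₀ + 1`. -/
def tsDisj (t ℓ : ℕ) (p : Fin t × Fin ℓ) : ℕ := (p.2 : ℕ) * t + (p.1 : ℕ) + 1

/-- Value of that item: `(ℓ-j)t + i` with 1-indexed `i,j`. -/
def valDisj (t ℓ : ℕ) (p : Fin t × Fin ℓ) : ℕ := (ℓ - 1 - (p.2 : ℕ)) * t + (p.1 : ℕ) + 1

theorem disj_disjoint_lis_one (t ℓ : ℕ) (ht : 2 ≤ t) (hℓ : 1 ≤ ℓ)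
    (A : Fin t → Finset (Fin ℓ))
    (hdisj : ∀ i₁ i₂ : Fin t, i₁ ≠ i₂ → Disjoint (A i₁) (A i₂))
    (S : Finset (Fin t × Fin ℓ))
    (hS : S = Finset.univ.filter (fun p : Fin t × Fin ℓ => p.2 ∈ A p.1))
    (hne : S.Nonempty)
    (f : Fin S.card → Fin t × Fin ℓ)
    (hf : ∀ k, f k ∈ S) (hinj : Function.Injective f)
    (hmono : StrictMono (fun k => tsDisj t ℓ (f k))) :
    lisLen (fun k => valDisj t ℓ (f k)) = 1 := by
  set σ : Fin S.card → ℕ := fun k => valDisj t ℓ (f k) with hσ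
  have hmem : ∀ k, (f k).2 ∈ A (f k).1 := by
    intro k
    have := hf k
    rw [hS, Finset.mem_filter] at this
    exact this.2
  -- the value sequence is strictly decreasing
  have hdec : ∀ k k' : Fin S.card, k < k' → σ k' < σ k := by
    intro k k' hkk
    have hts : tsDisj t ℓ (f k) < tsDisj t ℓ (f k') := hmono hkk
    simp only [tsDisj] at hts
    have hi : ((f k).1 : ℕ) < t := (f k).1.isLt
    have hi' : ((f k').1 : ℕ) < t := (f k').1.isLt
    have hj' : ((f k').2 : ℕ) < ℓ := (f k').2.isLt
    have hjj : ((f k).2 : ℕ) < ((f k').2 : ℕ) := by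
      rcases lt_trichotomy ((f k).2 : ℕ) ((f k').2 : ℕ) with h | h | h
      · exact h
      · exfalso
        have hne12 : (f k).1 ≠ (f k').1 := by
          intro h'
          have h2 : ((f k).1 : ℕ) = ((f k').1 : ℕ) := congrArg Fin.val h'
          rw [h] at hts
          omega
        have heq2 : (f k).2 = (f k').2 := Fin.ext h
        exact (Finset.disjoint_left.mp (hdisj _ _ hne12) (hmem k)) (heq2 ▸ hmem k')
      · exfalso
        have h2 : ((f k').2 : ℕ) * t + t ≤ ((f k).2 : ℕ) * t := by
          calc ((f k').2 : ℕ) * t + t = (((f k').2 : ℕ) + 1) * t := by ring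
            _ ≤ ((f k).2 : ℕ) * t := Nat.mul_le_mul_right t h
        omega
    show valDisj t ℓ (f k') < valDisj t ℓ (f k)
    simp only [valDisj]
    have h1 : ℓ - 1 - ((f k').2 : ℕ) + 1 ≤ ℓ - 1 - ((f k).2 : ℕ) := by omega
    have h2 : (ℓ - 1 - ((f k').2 : ℕ) + 1) * t ≤ (ℓ - 1 - ((f k).2 : ℕ)) * t :=
      Nat.mul_le_mul_right t h1
    have h3 : (ℓ - 1 - ((f k').2 : ℕ) + 1) * t = (ℓ - 1 - ((f k').2 : ℕ)) * t + t := by ring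
    omega
  -- any monotone set has at most one element
  have hcard : ∀ T : Finset (Fin S.card), MonoOn σ T → T.card ≤ 1 := by
    intro T hT
    by_contra h
    push_neg at h
    obtain ⟨a, ha, b, hb, hab⟩ := Finset.one_lt_card.mp h
    rcases lt_or_gt_of_ne hab with hlt | hlt
    · exact absurd (hT a ha b hb hlt.le) (not_le.mpr (hdec a b hlt))
    · exact absurd (hT b hb a ha hlt.le) (not_le.mpr (hdec b a hlt))
  have hpos : 0 < S.card := Finset.card_pos.mpr hne
  have h1mem : (1 : ℕ) ∈ {k | ∃ T : Finset (Fin S.card), T.card = k ∧ MonoOn σ T} := by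
    refine ⟨{⟨0, hpos⟩}, Finset.card_singleton _, ?_⟩
    intro a ha b hb _
    simp only [Finset.mem_singleton] at ha hb
    subst ha; subst hb; exact le_refl _
  have hub : ∀ k ∈ {k | ∃ T : Finset (Fin S.card), T.card = k ∧ MonoOn σ T}, k ≤ 1 := by
    rintro k ⟨T, hTc, hT⟩
    exact hTc ▸ hcard T hT
  exact le_antisymm (csSup_le ⟨1, h1mem⟩ hub) (le_csSup ⟨1, hub⟩ h1mem)
end
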